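/- Orthogonality of the polynomials ψ_n under the Poisson distribution: if A is Poisson with mean r > 0, then E[ψ_n(A) ψ_{n'}(A)] = n! r^n if n = n', and 0 otherwise. -/

import Mathlib

/-- Falling factorial `(a)_k` as a real number. -/
def fall (a k : ℕ) : ℝ := (a.descFactorial k : ℝ)

/-- `ψ_n(a) = Σ_{k=0}^{n} C(n,k) (-r)^k (a)_{n-k}`. -/
def psi (r : ℝ) (n a : ℕ) : ℝ :=
  ∑ k ∈ Finset.range (n + 1), (n.choose k : ℝ) * (-r) ^ k * fall a (n - k)

/-- Poisson probability mass function with mean `r`. -/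
noncomputable def poissonPMF (r : ℝ) (a : ℕ) : ℝ := Real.exp (-r) * r ^ a / (Nat.factorial a : ℝ)

open Finset

/-! The Poisson weights satisfy the shift identity `E[(A)_j g(A)] = r^j E[g(A + j)]`. Since `ψ` is
`(-r)^·` binomially convolved with `(a)_·`, Vandermonde's identity for falling factorials gives
`ψ_m(a + t) = Σ_s C(m,s) ψ_s(a) (t)_{m-s}`, and `E[ψ_s(A)] = (-r + r)^s = 0^s`; together,
`E[(A)_j ψ_m(A)] = r^j (j)_m`. Expanding `ψ_n` then yields
`E[ψ_n(A) ψ_{n'}(A)] = Σ_k C(n,k) (-r)^k r^{n-k} (n-k)_{n'}`: for `n ≤ n'` every falling factorial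
vanishes except `(n)_n = n!` when `n = n'`, and the case `n > n'` follows by symmetry. -/

section BinomConv

variable {R : Type*} [CommSemiring R]

def binomConv (f g : ℕ → R) (n : ℕ) : R :=
  ∑ k ∈ range (n + 1), (n.choose k : R) * f k * g (n - k)

theorem binomConv_assoc (f g h : ℕ → R) (n : ℕ) :
    binomConv f (binomConv g h) n = binomConv (binomConv f g) h n := by
  simp only [binomConv, mul_sum, sum_mul]
  rw [sum_sigma', sum_sigma']
  refine sum_nbij' (fun x ↦ ⟨x.1 + x.2, x.1⟩) (fun x ↦ ⟨x.2, x.1 - x.2⟩) ?_ ?_ ?_ ?_ ?_ <;>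
    simp only [mem_sigma, mem_range, Sigma.forall]
  · intro k s; omega
  · intro j k; omega
  · intro k s _; simp
  · intro j k ⟨_, _⟩; ext <;> simp; omega
  · intro k s _
    have hchoose := congrArg (Nat.cast (R := R)) (Nat.choose_mul (n := n) (Nat.le_add_right k s))
    rw [Nat.add_sub_cancel_left, Nat.cast_mul, Nat.cast_mul] at hchoose
    rw [Nat.add_sub_cancel_left, Nat.sub_sub]
    calc _ = (n.choose k * (n - k).choose s : R) * (f k * g s * h (n - (k + s))) := by ring
      _ = _ := by rw [← hchoose]; ring

theorem binomConv_pow (x y : R) (n : ℕ) :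
    binomConv (x ^ ·) (y ^ ·) n = (x + y) ^ n := by
  rw [add_pow]
  exact sum_congr rfl fun k _ ↦ by ring

theorem binomConv_zero_pow_left (g : ℕ → R) (n : ℕ) :
    binomConv (0 ^ ·) g n = g n := by
  rw [binomConv, sum_eq_single 0 (fun k _ hk ↦ by simp [hk]) (by simp)]
  simp

theorem binomConv_eq_of_forall_lt_eq_zero {g : ℕ → R} {n : ℕ} (hg : ∀ j < n, g j = 0)
    (f : ℕ → R) : binomConv f g n = f 0 * g n := by
  have hvanish (k : ℕ) (hk : k ∈ range (n + 1)) (hk0 : k ≠ 0) :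
      (n.choose k : R) * f k * g (n - k) = 0 := by
    rw [hg _ (by rw [mem_range] at hk; omega), mul_zero]
  rw [binomConv, sum_eq_single 0 hvanish (by simp)]
  simp

end BinomConv

theorem fall_eq_zero_of_lt {a j : ℕ} (h : a < j) : fall a j = 0 := by
  simp [fall, Nat.descFactorial_eq_zero_iff_lt.mpr h]

theorem fall_add (a t j : ℕ) : fall (a + t) j = binomConv (fall a) (fall t) j := by
  unfold fall binomConv
  rw [Nat.descFactorial_eq_factorial_mul_choose, Nat.add_choose_eq,
    Finset.Nat.sum_antidiagonal_eq_sum_range_succ_mk, mul_sum]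
  push_cast
  refine sum_congr rfl fun s hs ↦ ?_
  rw [Nat.descFactorial_eq_factorial_mul_choose, Nat.descFactorial_eq_factorial_mul_choose,
    ← Nat.choose_mul_factorial_mul_factorial (Nat.le_of_lt_succ (mem_range.mp hs))]
  push_cast
  ring

theorem hasSum_mul_binomConv_left {α : Type*} {p : α → ℝ} {u : α → ℕ → ℝ} {c : ℕ → ℝ}
    (h : ∀ k, HasSum (fun a ↦ p a * u a k) (c k)) (g : ℕ → ℝ) (n : ℕ) :
    HasSum (fun a ↦ p a * binomConv (u a) g n) (binomConv c g n) := by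
  simp only [binomConv, mul_sum]
  refine hasSum_sum fun k _ ↦ ?_
  exact (((h k).mul_left (n.choose k : ℝ)).mul_right (g (n - k))).congr_fun fun a ↦ by ring

theorem hasSum_mul_binomConv_right {α : Type*} {p : α → ℝ} {u : α → ℕ → ℝ} {c : ℕ → ℝ}
    (f : ℕ → ℝ) (h : ∀ k, HasSum (fun a ↦ p a * u a k) (c k)) (n : ℕ) :
    HasSum (fun a ↦ p a * binomConv f (u a) n) (binomConv f c n) := by
  simp only [binomConv, mul_sum]
  refine hasSum_sum fun k _ ↦ ?_
  exact ((h (n - k)).mul_left ((n.choose k : ℝ) * f k)).congr_fun fun a ↦ by ring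

theorem hasSum_poissonPMF (r : ℝ) : HasSum (poissonPMF r) 1 := by
  have h := (NormedSpace.expSeries_div_hasSum_exp r).mul_left (Real.exp (-r))
  rw [← Real.exp_eq_exp_ℝ, ← Real.exp_add, neg_add_cancel, Real.exp_zero] at h
  exact h.congr_fun fun a ↦ mul_div_assoc _ _ _

theorem poissonPMF_add_mul_fall (r : ℝ) (a j : ℕ) :
    poissonPMF r (a + j) * fall (a + j) j = r ^ j * poissonPMF r a := by
  have hfac := Nat.factorial_mul_descFactorial (Nat.le_add_left j a)
  rw [Nat.add_sub_cancel] at hfac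
  unfold poissonPMF fall
  rw [← hfac, pow_add]
  push_cast
  field_simp

theorem hasSum_poissonPMF_mul_fall_mul {r : ℝ} {j : ℕ} {g : ℕ → ℝ} {S : ℝ}
    (h : HasSum (fun a ↦ poissonPMF r a * g (a + j)) S) :
    HasSum (fun a ↦ poissonPMF r a * (fall a j * g a)) (r ^ j * S) := by
  rw [← hasSum_nat_add_iff' j, sum_eq_zero fun a ha ↦ by
    rw [fall_eq_zero_of_lt (mem_range.mp ha), zero_mul, mul_zero], sub_zero]
  exact (h.mul_left (r ^ j)).congr_fun fun a ↦ by
    rw [← mul_assoc, ← mul_assoc, poissonPMF_add_mul_fall, mul_assoc]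

theorem hasSum_poissonPMF_mul_fall (r : ℝ) (j : ℕ) :
    HasSum (fun a ↦ poissonPMF r a * fall a j) (r ^ j) := by
  have h := hasSum_poissonPMF_mul_fall_mul (j := j) (g := fun _ ↦ 1)
    ((hasSum_poissonPMF r).congr_fun fun a ↦ mul_one _)
  rw [mul_one] at h
  exact h.congr_fun fun a ↦ by rw [mul_one]

theorem psi_eq_binomConv (r : ℝ) (n a : ℕ) : psi r n a = binomConv ((-r) ^ ·) (fall a) n := rfl

theorem psi_add (r : ℝ) (m a t : ℕ) : psi r m (a + t) = binomConv (psi r · a) (fall t) m := by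
  simp only [psi_eq_binomConv, ← binomConv_assoc, funext (fall_add a t)]

theorem hasSum_poissonPMF_mul_psi (r : ℝ) (n : ℕ) :
    HasSum (fun a ↦ poissonPMF r a * psi r n a) (0 ^ n) := by
  rw [← neg_add_cancel r, ← binomConv_pow]
  exact hasSum_mul_binomConv_right _ (hasSum_poissonPMF_mul_fall r) n

theorem hasSum_poissonPMF_mul_psi_add (r : ℝ) (m t : ℕ) :
    HasSum (fun a ↦ poissonPMF r a * psi r m (a + t)) (fall t m) := by
  simp only [psi_add]
  rw [← binomConv_zero_pow_left (fall t) m]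
  exact hasSum_mul_binomConv_left (hasSum_poissonPMF_mul_psi r) _ m

theorem hasSum_poissonPMF_mul_psi_mul_psi (r : ℝ) (n n' : ℕ) :
    HasSum (fun a ↦ poissonPMF r a * (psi r n a * psi r n' a))
      (binomConv ((-r) ^ ·) (fun j ↦ r ^ j * fall j n') n) := by
  have h := hasSum_mul_binomConv_right ((-r) ^ ·)
    (fun j ↦ hasSum_poissonPMF_mul_fall_mul (hasSum_poissonPMF_mul_psi_add r n' j)) n
  refine h.congr_fun fun a ↦ ?_
  simp only [psi_eq_binomConv r n, binomConv, sum_mul, mul_sum]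
  exact sum_congr rfl fun k _ ↦ by ring

theorem poisson_psi_orthogonal_general (r : ℝ) (n n' : ℕ) :
    ∑' a : ℕ, poissonPMF r a * (psi r n a * psi r n' a) =
      if n = n' then (Nat.factorial n : ℝ) * r ^ n else 0 := by
  wlog hle : n ≤ n' generalizing n n'
  · simp_rw [mul_comm (psi r n _), this n' n (by omega), eq_comm (a := n')]
    split_ifs with h <;> simp [h]
  rw [(hasSum_poissonPMF_mul_psi_mul_psi r n n').tsum_eq,
    binomConv_eq_of_forall_lt_eq_zero fun j hj ↦ by rw [fall_eq_zero_of_lt (by omega), mul_zero]]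
  rcases hle.lt_or_eq with hlt | rfl
  · simp [fall_eq_zero_of_lt hlt, hlt.ne]
  · simp [fall, Nat.descFactorial_self, mul_comm]

/-- Orthogonality: for `A` Poisson with mean `r > 0`,
`E[ψ_n(A) ψ_{n'}(A)] = n! r^n δ_{n,n'}`. -/
theorem poisson_psi_orthogonal (r : ℝ) (hr : 0 < r) (n n' : ℕ) :
    ∑' a : ℕ, poissonPMF r a * (psi r n a * psi r n' a) =
      if n = n' then (Nat.factorial n : ℝ) * r ^ n else 0 :=
  poisson_psi_orthogonal_general r n n'
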